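/- Fix s ∈ (0,1) and let f ∈ W^{1,1}(R^n) ∩ W^{1,∞}(R^n) be nonzero. There exists a constant M > 0, independent of p, such that for all sufficiently large p, ‖ξ‖_{Π*,s_p f} ≤ M for almost every ξ ∈ S^{n−1}. -/

import Mathlib

/-!
A Lipschitz integrable function is bounded, say by `C`, so with `B = max(L, 2C, 1)` every
difference satisfies `|f(x + tξ) - f(x)| ≤ B min(t, 1)` for `|ξ| ≤ 1`. Bounding all but one factor
of `|f(x + tξ) - f(x)|^p` this way and the last one by translation invariance,
`∫ |f(x + tξ) - f(x)|^p dx ≤ (B min(t, 1))^(p-1) · 2‖f‖₁`. The remaining `t`-integral is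
explicit, `∫₀^∞ t^(-sp-1) min(t, 1)^(p-1) dt = 1/(p(1-s) - 1) + 1/(sp)`, and the factor `p(1-s)`
keeps it bounded, so `‖ξ‖^{sp} ≤ K B^(p-1)` with `K` independent of `p`. Its `sp`-th root is at
most `max(K, 1) B^(1/s)`.
-/

open MeasureTheory Set NNReal ENNReal

theorem LipschitzWith.exists_abs_le_of_integrable {E : Type*} [NormedAddCommGroup E]
    [NormedSpace ℝ E] [MeasurableSpace E] [BorelSpace E] [FiniteDimensional ℝ E]
    (μ : Measure E) [μ.IsAddHaarMeasure] {f : E → ℝ} {L : ℝ≥0}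
    (hlip : LipschitzWith L f) (hf : Integrable f μ) :
    ∃ C, ∀ x, |f x| ≤ C := by
  set r : ℝ := 1 / (L + 1)
  set V := μ (Metric.ball 0 r)
  have hV0 : V ≠ 0 := (Metric.measure_ball_pos μ 0 (by positivity)).ne'
  have hVtop : V ≠ ⊤ := measure_ball_lt_top.ne
  have hI : ∫⁻ x, ‖f x‖ₑ ∂μ ≠ ⊤ := hf.2.ne
  refine ⟨1 + ((∫⁻ x, ‖f x‖ₑ ∂μ) / V).toReal, fun x => ?_⟩
  have hball : ∀ y ∈ Metric.ball x r, ENNReal.ofReal (|f x| - 1) ≤ ‖f y‖ₑ := by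
    intro y hy
    have hLr : (L : ℝ) * r ≤ 1 := by
      rw [mul_one_div, div_le_one (by positivity)]; linarith
    have hxy : |f x - f y| ≤ L * dist x y := by
      simpa [Real.dist_eq] using hlip.dist_le_mul x y
    have : |f x| - |f y| ≤ 1 := by
      nlinarith [abs_sub_abs_le_abs_sub (f x) (f y), Metric.mem_ball'.1 hy, L.coe_nonneg]
    rw [Real.enorm_eq_ofReal_abs]
    exact ENNReal.ofReal_le_ofReal (by linarith)
  have hmass : ENNReal.ofReal (|f x| - 1) * V ≤ ∫⁻ y, ‖f y‖ₑ ∂μ :=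
    calc ENNReal.ofReal (|f x| - 1) * V
        = ∫⁻ _ in Metric.ball x r, ENNReal.ofReal (|f x| - 1) ∂μ := by
          rw [setLIntegral_const, Measure.addHaar_ball_center]
      _ ≤ ∫⁻ y in Metric.ball x r, ‖f y‖ₑ ∂μ := setLIntegral_mono' measurableSet_ball hball
      _ ≤ ∫⁻ y, ‖f y‖ₑ ∂μ := setLIntegral_le_lintegral _ _
  have := (ENNReal.ofReal_le_iff_le_toReal (ENNReal.div_ne_top hI hV0)).1
    ((ENNReal.le_div_iff_mul_le (Or.inl hV0) (Or.inl hVtop)).2 hmass)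
  linarith

theorem lintegral_enorm_sub_add_le {G F : Type*} [MeasurableSpace G] [AddGroup G]
    [MeasurableAdd G] {μ : Measure G} [μ.IsAddRightInvariant] [NormedAddCommGroup F]
    [MeasurableSpace F] [BorelSpace F] {f : G → F} (hf : Measurable f) (v : G) :
    ∫⁻ x, ‖f (x + v) - f x‖ₑ ∂μ ≤ 2 * ∫⁻ x, ‖f x‖ₑ ∂μ :=
  calc ∫⁻ x, ‖f (x + v) - f x‖ₑ ∂μ
      ≤ ∫⁻ x, (‖f (x + v)‖ₑ + ‖f x‖ₑ) ∂μ := lintegral_mono fun _ => enorm_sub_le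
    _ = ∫⁻ x, ‖f (x + v)‖ₑ ∂μ + ∫⁻ x, ‖f x‖ₑ ∂μ :=
        lintegral_add_left (hf.comp (measurable_add_const v)).enorm _
    _ = 2 * ∫⁻ x, ‖f x‖ₑ ∂μ := by
        rw [lintegral_add_right_eq_self (fun x => ‖f x‖ₑ) v, two_mul]

theorem rpow_le_rpow_sub_one_mul {a b p : ℝ} (ha : 0 ≤ a) (hab : a ≤ b) (hp : 1 ≤ p) :
    a ^ p ≤ b ^ (p - 1) * a := by
  rcases ha.eq_or_lt with rfl | ha
  · rw [Real.zero_rpow (by linarith), mul_zero]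
  · conv_lhs => rw [← sub_add_cancel p 1, Real.rpow_add_one ha.ne']
    exact mul_le_mul_of_nonneg_right (Real.rpow_le_rpow ha.le hab (by linarith)) ha.le

theorem lintegral_ofReal_abs_rpow_le {α : Type*} [MeasurableSpace α] (μ : Measure α)
    {g : α → ℝ} {m p : ℝ} (hp : 1 ≤ p) (hg : ∀ x, |g x| ≤ m) :
    ∫⁻ x, ENNReal.ofReal (|g x| ^ p) ∂μ ≤ ENNReal.ofReal (m ^ (p - 1)) * ∫⁻ x, ‖g x‖ₑ ∂μ := by
  rw [← lintegral_const_mul' _ _ ofReal_ne_top]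
  refine lintegral_mono fun x => ?_
  have hm : 0 ≤ m := (abs_nonneg _).trans (hg x)
  rw [Real.enorm_eq_ofReal_abs, ← ENNReal.ofReal_mul (by positivity)]
  exact ENNReal.ofReal_le_ofReal (rpow_le_rpow_sub_one_mul (abs_nonneg _) (hg x) hp)

theorem lintegral_Ioc_zero_one_rpow {γ : ℝ} (hγ : -1 < γ) :
    ∫⁻ t in Ioc (0 : ℝ) 1, ENNReal.ofReal (t ^ γ) = ENNReal.ofReal (1 / (γ + 1)) := by
  have hint : IntegrableOn (fun t : ℝ => t ^ γ) (Ioc 0 1) :=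
    (intervalIntegrable_iff_integrableOn_Ioc_of_le zero_le_one).1
      (intervalIntegral.intervalIntegrable_rpow' hγ)
  rw [← ofReal_integral_eq_lintegral_ofReal hint
    ((ae_restrict_iff' measurableSet_Ioc).2 (ae_of_all _ fun t ht => Real.rpow_nonneg ht.1.le γ)),
    ← intervalIntegral.integral_of_le zero_le_one, integral_rpow (Or.inl hγ), Real.one_rpow,
    Real.zero_rpow (by linarith), sub_zero]

theorem lintegral_Ioi_one_rpow {γ : ℝ} (hγ : γ < -1) :
    ∫⁻ t in Ioi (1 : ℝ), ENNReal.ofReal (t ^ γ) = ENNReal.ofReal (-1 / (γ + 1)) := by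
  rw [← ofReal_integral_eq_lintegral_ofReal (integrableOn_Ioi_rpow_of_lt hγ zero_lt_one)
    ((ae_restrict_iff' measurableSet_Ioi).2
      (ae_of_all _ fun t ht => Real.rpow_nonneg (zero_le_one.trans ht.le) γ)),
    integral_Ioi_rpow_of_lt hγ zero_lt_one, Real.one_rpow]

theorem lintegral_Ioi_rpow_mul_min_one_rpow {α β : ℝ} (hα : 0 < α) (hαβ : α < β) :
    ∫⁻ t in Ioi (0 : ℝ), ENNReal.ofReal (t ^ (-α - 1) * min t 1 ^ β)
      = ENNReal.ofReal (1 / (β - α) + 1 / α) := by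
  rw [← Ioc_union_Ioi_eq_Ioi zero_le_one,
    lintegral_union measurableSet_Ioi (Ioc_disjoint_Ioi le_rfl),
    ENNReal.ofReal_add (by rw [one_div_nonneg]; linarith) (by positivity)]
  congr 1
  · rw [setLIntegral_congr_fun measurableSet_Ioc (g := fun t => ENNReal.ofReal (t ^ (β - α - 1)))
      fun t ht => by rw [min_eq_left ht.2, ← Real.rpow_add ht.1]; ring_nf,
      lintegral_Ioc_zero_one_rpow (by linarith)]
    ring_nf
  · rw [setLIntegral_congr_fun measurableSet_Ioi (g := fun t => ENNReal.ofReal (t ^ (-α - 1)))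
      fun t ht => by rw [min_eq_right ht.le, Real.one_rpow, mul_one],
      lintegral_Ioi_one_rpow (by linarith)]
    rw [sub_add_cancel, div_neg, neg_div, neg_neg]

/-- `‖ξ‖^{sp}_{Π^{*,s}_p f}` in the paper's notation: the `sp`-th power of the gauge of the polar
`(s,p)`-projection body of `f`. -/
noncomputable def gaugeRpow {E : Type*} [NormedAddCommGroup E] [NormedSpace ℝ E]
    [MeasurableSpace E] (μ : Measure E) (f : E → ℝ) (s p : ℝ) (ξ : E) : ℝ≥0∞ :=
  ENNReal.ofReal (p * (1 - s)) *
    ∫⁻ t in Ioi (0 : ℝ), ENNReal.ofReal (t ^ (-s * p - 1)) *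
      ∫⁻ x, ENNReal.ofReal (|f (x + t • ξ) - f x| ^ p) ∂μ

section Lipschitz

variable {E : Type*} [NormedAddCommGroup E] [NormedSpace ℝ E] {f : E → ℝ} {L : ℝ≥0} {C B : ℝ}

theorem LipschitzWith.abs_sub_add_smul_le (hlip : LipschitzWith L f) (hC : ∀ x, |f x| ≤ C)
    (hLB : L ≤ B) (hCB : 2 * C ≤ B) {t : ℝ} (ht : 0 ≤ t) {ξ : E} (hξ : ‖ξ‖ ≤ 1) (x : E) :
    |f (x + t • ξ) - f x| ≤ B * min t 1 := by
  rw [mul_min_of_nonneg _ _ (L.coe_nonneg.trans hLB), mul_one]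
  refine le_min ?_ ?_
  · calc |f (x + t • ξ) - f x| ≤ L * dist (x + t • ξ) x := by
          simpa [Real.dist_eq] using hlip.dist_le_mul (x + t • ξ) x
      _ = L * (t * ‖ξ‖) := by rw [dist_self_add_left, norm_smul, Real.norm_of_nonneg ht]
      _ ≤ B * t := mul_le_mul hLB (mul_le_of_le_one_right ht hξ) (by positivity) (by linarith)
  · linarith [abs_sub (f (x + t • ξ)) (f x), hC (x + t • ξ), hC x]

variable [MeasurableSpace E] [BorelSpace E] (μ : Measure E) [μ.IsAddRightInvariant]

theorem LipschitzWith.lintegral_abs_sub_add_smul_rpow_le (hlip : LipschitzWith L f)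
    (hf : Integrable f μ) (hC : ∀ x, |f x| ≤ C) (hLB : L ≤ B) (hCB : 2 * C ≤ B) {p t : ℝ}
    (hp : 1 ≤ p) (ht : 0 ≤ t) {ξ : E} (hξ : ‖ξ‖ ≤ 1) :
    ∫⁻ x, ENNReal.ofReal (|f (x + t • ξ) - f x| ^ p) ∂μ
      ≤ ENNReal.ofReal (min t 1 ^ (p - 1) * (2 * (∫ x, ‖f x‖ ∂μ) * B ^ (p - 1))) := by
  have hB : 0 ≤ B := L.coe_nonneg.trans hLB
  have hmin : 0 ≤ min t 1 := le_min ht zero_le_one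
  calc ∫⁻ x, ENNReal.ofReal (|f (x + t • ξ) - f x| ^ p) ∂μ
      ≤ ENNReal.ofReal ((B * min t 1) ^ (p - 1)) * ∫⁻ x, ‖f (x + t • ξ) - f x‖ₑ ∂μ :=
        lintegral_ofReal_abs_rpow_le μ hp (hlip.abs_sub_add_smul_le hC hLB hCB ht hξ)
    _ ≤ ENNReal.ofReal ((B * min t 1) ^ (p - 1)) * (2 * ENNReal.ofReal (∫ x, ‖f x‖ ∂μ)) := by
        rw [ofReal_integral_norm_eq_lintegral_enorm hf]
        gcongr
        exact lintegral_enorm_sub_add_le hlip.continuous.measurable (t • ξ)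
    _ = _ := by
        rw [← ENNReal.ofReal_ofNat 2, ← ENNReal.ofReal_mul zero_le_two,
          ← ENNReal.ofReal_mul (by positivity), Real.mul_rpow hB hmin]
        congr 1; ring

theorem gaugeRpow_le (hlip : LipschitzWith L f) (hf : Integrable f μ) (hC : ∀ x, |f x| ≤ C)
    (hLB : L ≤ B) (hCB : 2 * C ≤ B) {s p : ℝ} (hs : s ∈ Ioo 0 1) (hp : 2 ≤ p * (1 - s))
    {ξ : E} (hξ : ‖ξ‖ ≤ 1) :
    gaugeRpow μ f s p ξ ≤ ENNReal.ofReal ((2 + 1 / s) * (2 * ∫ x, ‖f x‖ ∂μ) * B ^ (p - 1)) := by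
  obtain ⟨hs0, hs1⟩ := hs
  set D := 2 * (∫ x, ‖f x‖ ∂μ) * B ^ (p - 1)
  have hD : 0 ≤ D := by have := L.coe_nonneg.trans hLB; positivity
  have hp1 : 1 ≤ p := by nlinarith
  have hgap : 0 < p - 1 - s * p := by linarith
  have hinner : ∀ t ∈ Ioi (0 : ℝ),
      ENNReal.ofReal (t ^ (-s * p - 1)) * ∫⁻ x, ENNReal.ofReal (|f (x + t • ξ) - f x| ^ p) ∂μ
        ≤ ENNReal.ofReal (t ^ (-s * p - 1) * min t 1 ^ (p - 1)) * ENNReal.ofReal D := by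
    intro t ht
    rw [ENNReal.ofReal_mul (Real.rpow_nonneg ht.out.le _), mul_assoc,
      ← ENNReal.ofReal_mul (Real.rpow_nonneg (le_min ht.out.le zero_le_one) _)]
    gcongr
    exact hlip.lintegral_abs_sub_add_smul_rpow_le μ hf hC hLB hCB hp1 ht.out.le hξ
  have hconst : p * (1 - s) * (1 / (p - 1 - s * p) + 1 / (s * p)) ≤ 2 + 1 / s := by
    have h1 : p * (1 - s) * (1 / (p - 1 - s * p)) ≤ 2 := by
      rw [mul_one_div, div_le_iff₀ (by linarith)]; linarith
    have h2 : p * (1 - s) * (1 / (s * p)) ≤ 1 / s := by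
      rw [mul_one_div, div_le_div_iff₀ (by positivity) hs0]
      nlinarith [mul_nonneg (mul_nonneg (by linarith : 0 ≤ p) hs0.le) hs0.le]
    linarith [mul_add (p * (1 - s)) (1 / (p - 1 - s * p)) (1 / (s * p))]
  calc gaugeRpow μ f s p ξ
      ≤ ENNReal.ofReal (p * (1 - s)) *
        ((∫⁻ t in Ioi (0 : ℝ), ENNReal.ofReal (t ^ (-s * p - 1) * min t 1 ^ (p - 1))) *
          ENNReal.ofReal D) := by
        rw [gaugeRpow, ← lintegral_mul_const' _ _ ofReal_ne_top]
        exact mul_le_mul_right (setLIntegral_mono' measurableSet_Ioi hinner) _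
    _ = ENNReal.ofReal (p * (1 - s) * (1 / (p - 1 - s * p) + 1 / (s * p)) * D) := by
        rw [neg_mul, lintegral_Ioi_rpow_mul_min_one_rpow (by positivity) (by linarith),
          ← ENNReal.ofReal_mul (by positivity), ← ENNReal.ofReal_mul (by linarith)]
        congr 1; ring
    _ ≤ _ := by
        rw [mul_assoc _ _ (B ^ (p - 1))]
        exact ENNReal.ofReal_le_ofReal (mul_le_mul_of_nonneg_right hconst hD)

end Lipschitz

theorem mul_rpow_sub_one_le_rpow {K B s p : ℝ} (hB : 1 ≤ B) (hs : 0 < s) (hsp : 1 ≤ s * p) :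
    K * B ^ (p - 1) ≤ (max K 1 * B ^ (1 / s)) ^ (s * p) := by
  have hp : (1 / s) * (s * p) = p := by field_simp
  rw [Real.mul_rpow (by positivity) (by positivity), ← Real.rpow_mul (by linarith), hp]
  calc K * B ^ (p - 1) ≤ max K 1 * B ^ (p - 1) :=
        mul_le_mul_of_nonneg_right (le_max_left _ _) (by positivity)
    _ ≤ max K 1 ^ (s * p) * B ^ p :=
        mul_le_mul (Real.self_le_rpow_of_one_le (le_max_right _ _) hsp)
          (Real.rpow_le_rpow_of_exponent_le hB (by linarith)) (by positivity) (by positivity)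

theorem gauge_uniform_bound_in_p_general {n : ℕ}
    (f : EuclideanSpace ℝ (Fin n) → ℝ) (L : ℝ≥0)
    (hf1 : Integrable f) (hlip : LipschitzWith L f)
    (s : ℝ) (hs : s ∈ Ioo (0:ℝ) 1) :
    ∃ M > (0:ℝ), ∃ p₀ : ℝ, ∀ p ≥ p₀,
      ∀ᵐ (ξ : Metric.sphere (0 : EuclideanSpace ℝ (Fin n)) 1)
          ∂(volume : Measure (EuclideanSpace ℝ (Fin n))).toSphere,
        (ENNReal.ofReal (p * (1 - s)) *
            ∫⁻ t in Ioi (0:ℝ), ENNReal.ofReal (t ^ (-s * p - 1)) *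
              ∫⁻ x, ENNReal.ofReal
                (|f (x + t • (ξ : EuclideanSpace ℝ (Fin n))) - f x| ^ p)) ^ (1 / (s * p))
          ≤ ENNReal.ofReal M := by
  obtain ⟨C, hC⟩ := hlip.exists_abs_le_of_integrable volume hf1
  set B : ℝ := max (max L (2 * C)) 1
  set K : ℝ := (2 + 1 / s) * (2 * ∫ x, ‖f x‖)
  refine ⟨max K 1 * B ^ (1 / s), by positivity, max (2 / (1 - s)) (1 / s),
    fun p hp => ae_of_all _ fun ξ => ?_⟩
  have hp2 : 2 ≤ p * (1 - s) := (div_le_iff₀ (by linarith [hs.2])).1 (le_of_max_le_left hp)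
  have hsp : 1 ≤ s * p := by
    have := (div_le_iff₀ hs.1).1 (le_of_max_le_right hp); linarith
  have hG := gaugeRpow_le (B := B) volume hlip hf1 hC ((le_max_left _ _).trans (le_max_left _ _))
    ((le_max_right _ _).trans (le_max_left _ _)) hs hp2 (norm_eq_of_mem_sphere ξ).le
  rw [one_div, ENNReal.rpow_inv_le_iff (by linarith),
    ENNReal.ofReal_rpow_of_nonneg (by positivity) (by linarith)]
  exact hG.trans (ENNReal.ofReal_le_ofReal (mul_rpow_sub_one_le_rpow (le_max_right _ _) hs.1 hsp))

/-- Fix `s ∈ (0,1)` and let `f ∈ W^{1,1}(ℝⁿ) ∩ W^{1,∞}(ℝⁿ)` be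
nonzero. There exists `M > 0`, independent of `p`, such that for all sufficiently large
`p`, the gauge `‖ξ‖_{Π^{*,s}_p f}` is at most `M` for almost every `ξ ∈ S^{n−1}`
(with respect to the spherical measure). -/
theorem gauge_uniform_bound_in_p {n : ℕ}
    (f : EuclideanSpace ℝ (Fin n) → ℝ) (L : ℝ≥0)
    (hf1 : Integrable f) (hlip : LipschitzWith L f) (hd : Differentiable ℝ f)
    (hg1 : Integrable (fun x => fderiv ℝ f x)) (hne : f ≠ 0)
    (s : ℝ) (hs : s ∈ Ioo (0:ℝ) 1) :
    ∃ M > (0:ℝ), ∃ p₀ : ℝ, ∀ p ≥ p₀,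
      ∀ᵐ (ξ : Metric.sphere (0 : EuclideanSpace ℝ (Fin n)) 1)
          ∂(volume : Measure (EuclideanSpace ℝ (Fin n))).toSphere,
        (ENNReal.ofReal (p * (1 - s)) *
            ∫⁻ t in Ioi (0:ℝ), ENNReal.ofReal (t ^ (-s * p - 1)) *
              ∫⁻ x, ENNReal.ofReal
                (|f (x + t • (ξ : EuclideanSpace ℝ (Fin n))) - f x| ^ p)) ^ (1 / (s * p))
          ≤ ENNReal.ofReal M :=
  gauge_uniform_bound_in_p_general f L hf1 hlip s hs
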